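/- Let 𝒪 be an order ideal in P = K[x_0,…,x_n] and let G be a homogeneous ∂𝒪-prebasis. Then for every d ≥ 0 the residue classes of the terms of 𝒪_d generate the K-vector space P_d/(G)_d; equivalently, P_d = (G)_d + ⟨𝒪_d⟩ for every d ≥ 0. -/

import Mathlib

open MvPolynomial

namespace Border

/-- A term of `K[x_0, …, x_n]`, identified with its exponent vector. -/
abbrev Term (n : ℕ) := Fin (n + 1) →₀ ℕ

variable {n : ℕ}

/-- The (standard) degree of a term. -/
def tdeg (m : Term n) : ℕ := ∑ i, m i

/-- An order ideal: a nonempty set of terms closed under divisors. -/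
def IsOrderIdeal (O : Set (Term n)) : Prop :=
  O.Nonempty ∧ ∀ τ ∈ O, ∀ τ' : Term n, τ' ≤ τ → τ' ∈ O

/-- The border `∂𝒪 = (x_0·𝒪 ∪ ⋯ ∪ x_n·𝒪) ∖ 𝒪`. -/
def border (O : Set (Term n)) : Set (Term n) :=
  {σ | σ ∉ O ∧ ∃ r : Fin (n + 1), ∃ τ ∈ O, σ = τ + Finsupp.single r 1}

/-- Multiplicative set of a border term `σ`, with respect to a labeling `lab` of the border:
`𝒯_σ = {η : σ' ∤ η·σ for every border term σ' with a larger label}`. -/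
def mulSet (O : Set (Term n)) (lab : Term n → ℕ) (σ : Term n) : Set (Term n) :=
  {η | ∀ σ' ∈ border O, lab σ < lab σ' → ¬ σ' ≤ η + σ}

/-- The cone `C(σ) = {η·σ : η ∈ 𝒯_σ}`. -/
def cone (O : Set (Term n)) (lab : Term n → ℕ) (σ : Term n) : Set (Term n) :=
  (fun η => η + σ) '' mulSet O lab σ

/-- A labeling of the border which is injective and ordered increasingly by degree. -/
def DegOrderedLabeling (O : Set (Term n)) (lab : Term n → ℕ) : Prop :=
  Set.InjOn lab (border O) ∧
    ∀ σ ∈ border O, ∀ σ' ∈ border O, lab σ < lab σ' → tdeg σ ≤ tdeg σ'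

/-- Iterated border closures: `∂⁰𝒪 := 𝒪`, and the `(k+1)`-st closure adds the border. -/
def borderClosure (O : Set (Term n)) : ℕ → Set (Term n)
  | 0 => O
  | k + 1 => borderClosure O k ∪ border (borderClosure O k)

/-- The index `ind_𝒪(τ)`: the least `k` with `τ ∈ ∂^k𝒪`. -/
noncomputable def ind (O : Set (Term n)) (τ : Term n) : ℕ :=
  sInf {k | τ ∈ borderClosure O k}

/-- Degree-`d` part of a set of terms. -/
def Od (O : Set (Term n)) (d : ℕ) : Set (Term n) := {τ | τ ∈ O ∧ tdeg τ = d}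

variable {K : Type*} [Field K]

/-- The index of a nonzero polynomial: the maximal index of a term of its support. -/
noncomputable def indP (O : Set (Term n)) (f : MvPolynomial (Fin (n + 1)) K) : ℕ :=
  f.support.sup (ind O)

/-- A homogeneous `∂𝒪`-prebasis: a family `g σ = σ - Σ_{τ ∈ 𝒪_{deg σ}} c_{στ} τ`. -/
def IsPrebasis (O : Set (Term n)) (g : Term n → MvPolynomial (Fin (n + 1)) K) : Prop :=
  ∀ σ ∈ border O, ∀ τ ∈ (monomial σ (1 : K) - g σ).support, τ ∈ O ∧ tdeg τ = tdeg σ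

/-- The set of border reductors `𝒯G = {η·g_σ : σ ∈ ∂𝒪, η ∈ 𝒯_σ}`. -/
def reductors (O : Set (Term n)) (lab : Term n → ℕ)
    (g : Term n → MvPolynomial (Fin (n + 1)) K) : Set (MvPolynomial (Fin (n + 1)) K) :=
  {p | ∃ σ ∈ border O, ∃ η ∈ mulSet O lab σ, p = monomial η (1 : K) * g σ}

/-- The degree-`d` border reductors `𝒯G_d = 𝒯G ∩ P_d`. -/
def reductorsDeg (O : Set (Term n)) (lab : Term n → ℕ)
    (g : Term n → MvPolynomial (Fin (n + 1)) K) (d : ℕ) :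
    Set (MvPolynomial (Fin (n + 1)) K) :=
  reductors O lab g ∩ {p | p.IsHomogeneous d}

/-- One step of the border reduction relation `→_G`. -/
def Step (O : Set (Term n)) (lab : Term n → ℕ)
    (g : Term n → MvPolynomial (Fin (n + 1)) K)
    (f h : MvPolynomial (Fin (n + 1)) K) : Prop :=
  ∃ σ ∈ border O, ∃ η ∈ mulSet O lab σ, η + σ ∈ f.support ∧
    h = f - f.coeff (η + σ) • (monomial η (1 : K) * g σ)

/-- The border reduction relation `→⁺_G` (finitely many, possibly zero, steps). -/
def Reduces (O : Set (Term n)) (lab : Term n → ℕ)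
    (g : Term n → MvPolynomial (Fin (n + 1)) K) :
    MvPolynomial (Fin (n + 1)) K → MvPolynomial (Fin (n + 1)) K → Prop :=
  Relation.ReflTransGen (Step O lab g)

/-- The `K`-vector space spanned by a set of terms. -/
noncomputable def spanTerms (K : Type*) [Field K] (S : Set (Term n)) :
    Submodule K (MvPolynomial (Fin (n + 1)) K) :=
  Submodule.span K ((fun τ => monomial τ (1 : K)) '' S)

/-- The ideal `(G)` generated by a `∂𝒪`-prebasis. -/
noncomputable def idealG (O : Set (Term n)) (g : Term n → MvPolynomial (Fin (n + 1)) K) :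
    Ideal (MvPolynomial (Fin (n + 1)) K) :=
  Ideal.span (g '' border O)

/-- The degree-`d` part `I_d` of an ideal, as a `K`-vector subspace. -/
noncomputable def degPart (I : Ideal (MvPolynomial (Fin (n + 1)) K)) (d : ℕ) :
    Submodule K (MvPolynomial (Fin (n + 1)) K) :=
  Submodule.restrictScalars K I ⊓ homogeneousSubmodule (Fin (n + 1)) K d

/-- Homogeneous ideal. -/
def IsHomogeneousIdeal (I : Ideal (MvPolynomial (Fin (n + 1)) K)) : Prop :=
  ∀ f ∈ I, ∀ d : ℕ, homogeneousComponent d f ∈ I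

/-- `G` is a homogeneous `∂𝒪`-basis of `J`: it is a prebasis contained in `J` and for every
`d` one has `P_d = J_d ⊕ ⟨𝒪_d⟩`, i.e. the residue classes of `𝒪_d` are a basis of `P_d/J_d`. -/
def IsBorderBasisOf (O : Set (Term n)) (g : Term n → MvPolynomial (Fin (n + 1)) K)
    (J : Ideal (MvPolynomial (Fin (n + 1)) K)) : Prop :=
  IsPrebasis O g ∧ (∀ σ ∈ border O, g σ ∈ J) ∧
    ∀ d : ℕ, degPart J d ⊔ spanTerms K (Od O d) = homogeneousSubmodule (Fin (n + 1)) K d ∧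
      Disjoint (degPart J d) (spanTerms K (Od O d))

/-- An `m`-lower representation of `f` by `𝒯G`: `f = Σ c_j • η_j·g_{σ_j}` with distinct
pairs `(η_j, σ_j)`, `η_j ∈ 𝒯_{σ_j}` and `ind(η_j σ_j) ≤ m`. -/
def HasLRep (O : Set (Term n)) (lab : Term n → ℕ)
    (g : Term n → MvPolynomial (Fin (n + 1)) K)
    (f : MvPolynomial (Fin (n + 1)) K) (m : ℕ) : Prop :=
  ∃ (s : Finset (Term n × Term n)) (c : Term n × Term n → K),
    (∀ p ∈ s, p.2 ∈ border O ∧ p.1 ∈ mulSet O lab p.2 ∧ ind O (p.1 + p.2) ≤ m) ∧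
    f = ∑ p ∈ s, c p • (monomial p.1 (1 : K) * g p.2)

/-- An `m`-lower representation of `f` by `𝒯G_d`. -/
def HasLRepDeg (O : Set (Term n)) (lab : Term n → ℕ)
    (g : Term n → MvPolynomial (Fin (n + 1)) K)
    (f : MvPolynomial (Fin (n + 1)) K) (m d : ℕ) : Prop :=
  ∃ (s : Finset (Term n × Term n)) (c : Term n × Term n → K),
    (∀ p ∈ s, p.2 ∈ border O ∧ p.1 ∈ mulSet O lab p.2 ∧ ind O (p.1 + p.2) ≤ m ∧
      (monomial p.1 (1 : K) * g p.2).IsHomogeneous d) ∧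
    f = ∑ p ∈ s, c p • (monomial p.1 (1 : K) * g p.2)

/-- The subtype of terms of `𝒪` of degree `d`. -/
abbrev OdSub (O : Set (Term n)) (d : ℕ) : Type _ := {τ : Term n // τ ∈ Od O d}

lemma tdeg_component_lt {d : ℕ} (m : Term n) (h : tdeg m = d) (i : Fin (n + 1)) :
    m i < d + 1 := by
  have : m i ≤ tdeg m :=
    Finset.single_le_sum (f := fun j => m j) (fun j _ => Nat.zero_le _) (Finset.mem_univ i)
  omega

instance (O : Set (Term n)) (d : ℕ) : Finite (OdSub O d) := by
  have hinj : Function.Injective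
      (fun τ : OdSub O d => fun i : Fin (n + 1) =>
        (⟨τ.1 i, tdeg_component_lt τ.1 τ.2.2 i⟩ : Fin (d + 1))) := by
    intro a b hab
    apply Subtype.ext
    apply Finsupp.ext
    intro i
    simpa using congrArg Fin.val (congrFun hab i)
  exact Finite.of_injective _ hinj

noncomputable instance (O : Set (Term n)) (d : ℕ) : Fintype (OdSub O d) :=
  Fintype.ofFinite _

open scoped Classical in
/-- The `r`-th `d`-graded formal multiplication matrix of a prebasis `G`,
with rows indexed by `𝒪_{d+1}` and columns by `𝒪_d`. -/
noncomputable def multMatrix (O : Set (Term n))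
    (g : Term n → MvPolynomial (Fin (n + 1)) K) (r : Fin (n + 1)) (d : ℕ) :
    Matrix (OdSub O (d + 1)) (OdSub O d) K :=
  Matrix.of fun τ' τ =>
    if τ.1 + Finsupp.single r 1 ∈ O then
      (if τ.1 + Finsupp.single r 1 = τ'.1 then 1 else 0)
    else (monomial (τ.1 + Finsupp.single r 1) (1 : K)
            - g (τ.1 + Finsupp.single r 1)).coeff τ'.1

/-- The minimum degree of a border term. -/
noncomputable def minDegBorder (O : Set (Term n)) : ℕ := sInf (tdeg '' border O)

/-- The `d`-th Macaulay transformation `a^{⟨d⟩}`, computed greedily. -/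
noncomputable def macaulay : ℕ → ℕ → ℕ
  | 0, _ => 0
  | d + 1, a =>
    if a = 0 then 0
    else
      Nat.choose (sSup {k | Nat.choose k (d + 1) ≤ a} + 1) (d + 2) +
        macaulay d (a - Nat.choose (sSup {k | Nat.choose k (d + 1) ≤ a}) (d + 1))

/-- An ideal is generated in degrees `≤ m` if it is generated by its homogeneous
elements of degree `≤ m`. -/
def GeneratedInDegLE (I : Ideal (MvPolynomial (Fin (n + 1)) K)) (m : ℕ) : Prop :=
  I = Ideal.span {f | f ∈ I ∧ ∃ d ≤ m, f.IsHomogeneous d}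

/-! Every term of degree `d` lies in `(G)_d + ⟨𝒪_d⟩`, by induction along multiplication by
variables starting from `1 ∈ 𝒪`. The induction step is `x_r·⟨𝒪_d⟩ ⊆ (G)_{d+1} + ⟨𝒪_{d+1}⟩`:
a term `x_r·τ` with `τ ∈ 𝒪` either lies in `𝒪` or is a border term `σ`, and then
`σ = g_σ + (σ - g_σ)` with `σ - g_σ ∈ ⟨𝒪_{d+1}⟩` by the shape of a prebasis. -/

theorem _root_.Finsupp.induction_on_add_single_one {ι : Type*} {p : (ι →₀ ℕ) → Prop}
    (τ : ι →₀ ℕ) (zero : p 0) (add_single_one : ∀ τ i, p τ → p (τ + Finsupp.single i 1)) :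
    p τ := by
  induction τ using Finsupp.induction with
  | zero => exact zero
  | single_add i k τ _ _ ih =>
    clear * - ih add_single_one
    induction k with
    | zero => simpa using ih
    | succ k ihk =>
      rw [Finsupp.single_add, add_right_comm]
      exact add_single_one _ i ihk

lemma IsOrderIdeal.zero_mem {O : Set (Term n)} (hO : IsOrderIdeal O) : 0 ∈ O :=
  let ⟨τ, hτ⟩ := hO.1
  hO.2 τ hτ 0 zero_le

lemma tdeg_eq_degree (τ : Term n) : tdeg τ = τ.degree :=
  (Finsupp.degree_eq_sum τ).symm

lemma tdeg_add_single (τ : Term n) (r : Fin (n + 1)) :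
    tdeg (τ + Finsupp.single r 1) = tdeg τ + 1 := by
  simp [tdeg_eq_degree]

lemma spanTerms_eq_restrictSupport (S : Set (Term n)) :
    spanTerms K S = restrictSupport K S :=
  (restrictSupport_eq_span K S).symm

lemma homogeneousSubmodule_eq_spanTerms (d : ℕ) :
    homogeneousSubmodule (Fin (n + 1)) K d = spanTerms K {τ | tdeg τ = d} := by
  simp only [spanTerms_eq_restrictSupport, tdeg_eq_degree]
  exact homogeneousSubmodule_eq_finsupp_supported (Fin (n + 1)) K d

lemma spanTerms_Od_le_homogeneousSubmodule (O : Set (Term n)) (d : ℕ) :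
    spanTerms K (Od O d) ≤ homogeneousSubmodule (Fin (n + 1)) K d := by
  rw [homogeneousSubmodule_eq_spanTerms]
  exact Submodule.span_mono (Set.image_mono fun _ hτ => hτ.2)

lemma mul_X_mem_degPart {I : Ideal (MvPolynomial (Fin (n + 1)) K)} {f : MvPolynomial _ K}
    {d : ℕ} (hf : f ∈ degPart I d) (r : Fin (n + 1)) : f * X r ∈ degPart I (d + 1) :=
  ⟨I.mul_mem_right _ hf.1, hf.2.mul (isHomogeneous_X K r)⟩

noncomputable def idealSupSpan (O : Set (Term n)) (g : Term n → MvPolynomial (Fin (n + 1)) K)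
    (d : ℕ) : Submodule K (MvPolynomial (Fin (n + 1)) K) :=
  degPart (idealG O g) d ⊔ spanTerms K (Od O d)

section Prebasis

variable {O : Set (Term n)} {g : Term n → MvPolynomial (Fin (n + 1)) K}

lemma IsPrebasis.monomial_sub_mem_spanTerms (hg : IsPrebasis O g) {σ : Term n}
    (hσ : σ ∈ border O) : monomial σ 1 - g σ ∈ spanTerms K (Od O (tdeg σ)) := by
  rw [spanTerms_eq_restrictSupport, mem_restrictSupport_iff]
  exact fun τ hτ => hg σ hσ τ hτ

lemma IsPrebasis.isHomogeneous (hg : IsPrebasis O g) {σ : Term n} (hσ : σ ∈ border O) :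
    (g σ).IsHomogeneous (tdeg σ) := by
  have hmon : (monomial σ (1 : K)).IsHomogeneous (tdeg σ) :=
    isHomogeneous_monomial _ (tdeg_eq_degree σ).symm
  simpa using hmon.sub
    (spanTerms_Od_le_homogeneousSubmodule O _ (hg.monomial_sub_mem_spanTerms hσ))

lemma IsPrebasis.monomial_mem_idealSupSpan_of_mem_border (hg : IsPrebasis O g) {σ : Term n}
    (hσ : σ ∈ border O) : monomial σ (1 : K) ∈ idealSupSpan O g (tdeg σ) := by
  rw [← add_sub_cancel (g σ) (monomial σ 1)]
  exact Submodule.add_mem_sup ⟨Ideal.subset_span ⟨σ, hσ, rfl⟩, hg.isHomogeneous hσ⟩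
    (hg.monomial_sub_mem_spanTerms hσ)

lemma IsPrebasis.monomial_add_single_mem_idealSupSpan (hg : IsPrebasis O g) {τ : Term n}
    (hτ : τ ∈ O) (r : Fin (n + 1)) :
    monomial (τ + Finsupp.single r 1) (1 : K) ∈ idealSupSpan O g (tdeg τ + 1) := by
  by_cases hτr : τ + Finsupp.single r 1 ∈ O
  · exact Submodule.mem_sup_right
      (Submodule.subset_span ⟨_, ⟨hτr, tdeg_add_single τ r⟩, rfl⟩)
  · rw [← tdeg_add_single]
    exact hg.monomial_mem_idealSupSpan_of_mem_border ⟨hτr, r, τ, hτ, rfl⟩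

lemma IsPrebasis.mul_X_mem_idealSupSpan (hg : IsPrebasis O g) {f : MvPolynomial _ K} {d : ℕ}
    (hf : f ∈ idealSupSpan O g d) (r : Fin (n + 1)) : f * X r ∈ idealSupSpan O g (d + 1) := by
  obtain ⟨a, ha, b, hb, rfl⟩ := Submodule.mem_sup.mp hf
  rw [add_mul]
  refine add_mem (Submodule.mem_sup_left (mul_X_mem_degPart ha r)) ?_
  clear hf
  induction hb using Submodule.span_induction with
  | mem _ h =>
    obtain ⟨τ, ⟨hτ, rfl⟩, rfl⟩ := h
    rw [← pow_one (X r), ← monomial_add_single]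
    exact hg.monomial_add_single_mem_idealSupSpan hτ r
  | zero => simp
  | add x y _ _ hx hy => rw [add_mul]; exact add_mem hx hy
  | smul c x _ hx => rw [smul_mul_assoc]; exact Submodule.smul_mem _ c hx

lemma IsPrebasis.monomial_mem_idealSupSpan (hO : IsOrderIdeal O) (hg : IsPrebasis O g)
    (τ : Term n) : monomial τ (1 : K) ∈ idealSupSpan O g (tdeg τ) := by
  induction τ using Finsupp.induction_on_add_single_one with
  | zero =>
    exact Submodule.mem_sup_right
      (Submodule.subset_span ⟨0, ⟨hO.zero_mem, by simp [tdeg]⟩, rfl⟩)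
  | add_single_one τ r ih =>
    rw [monomial_add_single, pow_one, tdeg_add_single]
    exact hg.mul_X_mem_idealSupSpan ih r

end Prebasis

/-- **A prebasis generates modulo `𝒪`.** For every `d ≥ 0`, the residue classes of the
terms of `𝒪_d` generate `P_d/(G)_d`; equivalently `P_d = (G)_d + ⟨𝒪_d⟩`. -/
theorem prebasis_generates (O : Set (Term n)) (hO : IsOrderIdeal O)
    (g : Term n → MvPolynomial (Fin (n + 1)) K) (hg : IsPrebasis O g) :
    ∀ d : ℕ, degPart (idealG O g) d ⊔ spanTerms K (Od O d) =
      homogeneousSubmodule (Fin (n + 1)) K d := by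
  intro d
  refine le_antisymm (sup_le inf_le_right (spanTerms_Od_le_homogeneousSubmodule O d)) ?_
  rw [homogeneousSubmodule_eq_spanTerms, spanTerms, Submodule.span_le]
  rintro _ ⟨τ, rfl, rfl⟩
  exact hg.monomial_mem_idealSupSpan hO τ

end Border
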